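/- arXiv:1411.1302 — 4 statements merged into one kernel-verified Lean document; each statement's English description precedes it below -/
import Mathlib

section
/- Let W, W', V be real vector spaces, each with a linear representation of ℝ⁺, and let W × W' → V, (F,F') ↦ FF', be an equivariant product, i.e. a bilinear map satisfying (FF')_λ = F_λ F'_λ for all λ ∈ ℝ⁺. If F ∈ W has almost homogeneous degree k and order l, and F' ∈ W' has almost homogeneous degree k' and order l', then the product FF' ∈ V has almost homogeneous degree k + k' and order l + l'. -/
/-- `AlmostHom act k l F` : `F` has almost homogeneous degree `k` and order `l`
with respect to the linear representation `act` of `ℝ⁺`. -/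
def AlmostHom {W : Type*} [AddCommGroup W] [Module ℝ W]
    (act : ℝ → W →ₗ[ℝ] W) (k : ℝ) : ℕ → W → Prop
  | 0, F => ∀ μ : ℝ, 0 < μ → act μ F = μ ^ k • F
  | l + 1, F => ∃ G : Fin (l + 1) → W,
      (∀ j : Fin (l + 1), AlmostHom act k (l - (j : ℕ)) (G j)) ∧
      ∀ μ : ℝ, 0 < μ → act μ F =
        μ ^ k • F + μ ^ k • ∑ j : Fin (l + 1), (Real.log μ ^ ((j : ℕ) + 1)) • G j
  termination_by l _ => l
  decreasing_by omega

section Aux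

variable {W : Type*} [AddCommGroup W] [Module ℝ W] (act : ℝ → W →ₗ[ℝ] W) (k : ℝ)

lemma almostHom_zero : ∀ l : ℕ, AlmostHom act k l (0 : W) := by
  intro l
  induction l using Nat.strong_induction_on with
  | _ l ih =>
    match l with
    | 0 => rw [AlmostHom]; intro μ hμ; simp
    | l + 1 =>
      rw [AlmostHom]
      exact ⟨fun _ => 0, fun j => ih _ (by omega), fun μ hμ => by simp⟩

lemma almostHom_add : ∀ (l : ℕ) (F₁ F₂ : W), AlmostHom act k l F₁ → AlmostHom act k l F₂ →
    AlmostHom act k l (F₁ + F₂) := by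
  intro l
  induction l using Nat.strong_induction_on with
  | _ l ih =>
    match l with
    | 0 =>
      intro F₁ F₂ h₁ h₂
      rw [AlmostHom] at *
      intro μ hμ
      rw [map_add, h₁ μ hμ, h₂ μ hμ, smul_add]
    | l + 1 =>
      intro F₁ F₂ h₁ h₂
      rw [AlmostHom] at *
      obtain ⟨G₁, hG₁, he₁⟩ := h₁
      obtain ⟨G₂, hG₂, he₂⟩ := h₂
      refine ⟨fun j => G₁ j + G₂ j, fun j => ih _ (by omega) _ _ (hG₁ j) (hG₂ j), ?_⟩
      intro μ hμ
      rw [map_add, he₁ μ hμ, he₂ μ hμ]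
      simp only [smul_add, Finset.sum_add_distrib]
      abel

lemma almostHom_sum {ι : Type*} (l : ℕ) (s : Finset ι) (f : ι → W)
    (h : ∀ i ∈ s, AlmostHom act k l (f i)) : AlmostHom act k l (∑ i ∈ s, f i) := by
  induction s using Finset.cons_induction with
  | empty => simpa using almostHom_zero act k l
  | cons a s ha ih =>
    rw [Finset.sum_cons]
    exact almostHom_add act k l _ _ (h a (by simp)) (ih fun i hi => h i (by simp [hi]))

lemma almostHom_expand (l : ℕ) (F : W) (h : AlmostHom act k l F) :
    ∃ H : ℕ → W, H 0 = F ∧ (∀ j, AlmostHom act k (l - j) (H j)) ∧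
      ∀ μ : ℝ, 0 < μ → act μ F = μ ^ k • ∑ j ∈ Finset.range (l + 1), Real.log μ ^ j • H j := by
  match l with
  | 0 =>
    refine ⟨fun j => if j = 0 then F else 0, by simp, ?_, ?_⟩
    · intro j
      cases j with
      | zero => simpa using h
      | succ j => simpa using almostHom_zero act k _
    · intro μ hμ
      rw [AlmostHom] at h
      simp [h μ hμ]
  | L + 1 =>
    rw [AlmostHom] at h
    obtain ⟨G, hG, hexp⟩ := h
    refine ⟨fun j => match j with
      | 0 => F
      | j + 1 => if hj : j < L + 1 then G ⟨j, hj⟩ else 0, rfl, ?_, ?_⟩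
    · intro j
      match j with
      | 0 =>
        rw [Nat.sub_zero, AlmostHom]
        exact ⟨G, hG, hexp⟩
      | j + 1 =>
        by_cases hj : j < L + 1
        · simp only [hj, dif_pos]
          have := hG ⟨j, hj⟩
          simpa [Nat.succ_sub_succ] using this
        · simp only [hj, dif_neg]
          exact almostHom_zero act k _
    · intro μ hμ
      rw [hexp μ hμ, Finset.sum_range_succ' (fun j => Real.log μ ^ j • _) (L + 1)]
      simp only [pow_zero, one_smul, smul_add]
      have : ∑ x ∈ Finset.range (L + 1), Real.log μ ^ (x + 1) •
          (match x + 1 with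
            | 0 => F
            | j + 1 => if hj : j < L + 1 then G ⟨j, hj⟩ else 0)
          = ∑ j : Fin (L + 1), Real.log μ ^ ((j : ℕ) + 1) • G j := by
        rw [Finset.sum_range (fun x => Real.log μ ^ (x + 1) • _)]
        refine Finset.sum_congr rfl fun x _ => ?_
        simp [x.isLt]
      rw [this]
      abel

end Aux

section Aux2

variable {W : Type*} [AddCommGroup W] [Module ℝ W] (act : ℝ → W →ₗ[ℝ] W) (k : ℝ)

lemma almostHom_of_expand (n : ℕ) (F : W) (H : ℕ → W) (h0 : H 0 = F)
    (hH : ∀ j, 1 ≤ j → AlmostHom act k (n - j) (H j))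
    (hexp : ∀ μ : ℝ, 0 < μ → act μ F = μ ^ k • ∑ j ∈ Finset.range (n + 1), Real.log μ ^ j • H j) :
    AlmostHom act k n F := by
  match n with
  | 0 =>
    rw [AlmostHom]
    intro μ hμ
    simpa [h0] using hexp μ hμ
  | L + 1 =>
    rw [AlmostHom]
    refine ⟨fun j : Fin (L + 1) => H ((j : ℕ) + 1), fun j => by
      simpa [Nat.succ_sub_succ] using hH ((j : ℕ) + 1) (by omega), ?_⟩
    intro μ hμ
    rw [hexp μ hμ, Finset.sum_range_succ' (fun j => Real.log μ ^ j • H j) (L + 1)]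
    simp only [pow_zero, one_smul, h0, smul_add]
    rw [Finset.sum_range (fun x => Real.log μ ^ (x + 1) • H (x + 1))]
    abel

end Aux2

lemma almostHom_product_aux
    {W W' V : Type*} [AddCommGroup W] [Module ℝ W] [AddCommGroup W'] [Module ℝ W']
    [AddCommGroup V] [Module ℝ V]
    (actW : ℝ → W →ₗ[ℝ] W) (actW' : ℝ → W' →ₗ[ℝ] W') (actV : ℝ → V →ₗ[ℝ] V)
    (B : W →ₗ[ℝ] W' →ₗ[ℝ] V)
    (hequiv : ∀ lam : ℝ, 0 < lam → ∀ (F : W) (F' : W'),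
      actV lam (B F F') = B (actW lam F) (actW' lam F'))
    (k k' : ℝ) :
    ∀ (n l l' : ℕ) (F : W) (F' : W'), l + l' = n → AlmostHom actW k l F →
      AlmostHom actW' k' l' F' → AlmostHom actV (k + k') n (B F F') := by
  intro n
  induction n using Nat.strong_induction_on with
  | _ n ih =>
    intro l l' F F' hn hF hF'
    obtain ⟨H, hH0, hHord, hHexp⟩ := almostHom_expand actW k l F hF
    obtain ⟨H', hH'0, hH'ord, hH'exp⟩ := almostHom_expand actW' k' l' F' hF'
    set s : Finset (ℕ × ℕ) := Finset.range (l + 1) ×ˢ Finset.range (l' + 1) with hs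
    apply almostHom_of_expand actV (k + k') n _
      (fun m => ∑ p ∈ s.filter (fun p => p.1 + p.2 = m), B (H p.1) (H' p.2))
    · have hfil : s.filter (fun p => p.1 + p.2 = 0) = {((0 : ℕ), (0 : ℕ))} := by
        ext ⟨a, b⟩
        simp only [Finset.mem_filter, Finset.mem_product, Finset.mem_range, hs,
          Finset.mem_singleton, Prod.ext_iff]
        omega
      show ∑ p ∈ s.filter (fun p => p.1 + p.2 = 0), B (H p.1) (H' p.2) = B F F'
      rw [hfil, Finset.sum_singleton, hH0, hH'0]
    · intro j hj
      apply almostHom_sum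
      rintro ⟨a, b⟩ hp
      simp only [Finset.mem_filter, Finset.mem_product, Finset.mem_range, hs] at hp
      have h1 : (l - a) + (l' - b) = n - j := by omega
      rw [← h1]
      exact ih ((l - a) + (l' - b)) (by omega) (l - a) (l' - b) _ _ rfl (hHord a) (hH'ord b)
    · intro μ hμ
      have hmaps : ∀ p ∈ s, p.1 + p.2 ∈ Finset.range (n + 1) := by
        rintro ⟨a, b⟩ hp
        simp only [Finset.mem_product, Finset.mem_range, hs] at hp ⊢
        omega
      have key : ∑ p ∈ s, Real.log μ ^ (p.1 + p.2) • B (H p.1) (H' p.2)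
          = ∑ m ∈ Finset.range (n + 1), Real.log μ ^ m •
              ∑ p ∈ s.filter (fun p => p.1 + p.2 = m), B (H p.1) (H' p.2) := by
        rw [← Finset.sum_fiberwise_of_maps_to hmaps
          (fun p => Real.log μ ^ (p.1 + p.2) • B (H p.1) (H' p.2))]
        refine Finset.sum_congr rfl fun m _ => ?_
        rw [Finset.smul_sum]
        refine Finset.sum_congr rfl fun p hp => ?_
        rw [(Finset.mem_filter.mp hp).2]
      rw [hequiv μ hμ, hHexp μ hμ, hH'exp μ hμ, ← key, hs, Finset.sum_product
          (f := fun p : ℕ × ℕ => Real.log μ ^ (p.1 + p.2) • (B (H p.1)) (H' p.2)),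
        Real.rpow_add hμ, mul_smul]
      rw [map_smul, LinearMap.map_smul₂, smul_comm (μ ^ k') (μ ^ k)]
      congr 2
      rw [map_sum B, LinearMap.sum_apply]
      refine Finset.sum_congr rfl fun i _ => ?_
      rw [map_sum]
      refine Finset.sum_congr rfl fun j _ => ?_
      rw [map_smul, LinearMap.map_smul₂, smul_smul, pow_add]
      congr 1
      ring

/-- An equivariant product of an element of almost homogeneous degree `k` and order `l`
with an element of almost homogeneous degree `k'` and order `l'` has almost homogeneous
degree `k + k'` and order `l + l'`. -/
theorem almostHom_product
    {W W' V : Type*} [AddCommGroup W] [Module ℝ W] [AddCommGroup W'] [Module ℝ W']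
    [AddCommGroup V] [Module ℝ V]
    (actW : ℝ → W →ₗ[ℝ] W) (actW' : ℝ → W' →ₗ[ℝ] W') (actV : ℝ → V →ₗ[ℝ] V)
    (honeW : actW 1 = LinearMap.id)
    (hmulW : ∀ lam mu : ℝ, 0 < lam → 0 < mu → actW (lam * mu) = (actW lam).comp (actW mu))
    (honeW' : actW' 1 = LinearMap.id)
    (hmulW' : ∀ lam mu : ℝ, 0 < lam → 0 < mu → actW' (lam * mu) = (actW' lam).comp (actW' mu))
    (honeV : actV 1 = LinearMap.id)
    (hmulV : ∀ lam mu : ℝ, 0 < lam → 0 < mu → actV (lam * mu) = (actV lam).comp (actV mu))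
    (B : W →ₗ[ℝ] W' →ₗ[ℝ] V)
    (hequiv : ∀ lam : ℝ, 0 < lam → ∀ (F : W) (F' : W'),
      actV lam (B F F') = B (actW lam F) (actW' lam F'))
    (k k' : ℝ) (l l' : ℕ) (F : W) (F' : W')
    (hF : AlmostHom actW k l F) (hF' : AlmostHom actW' k' l' F') :
    AlmostHom actV (k + k') (l + l') (B F F') :=
  almostHom_product_aux actW actW' actV B hequiv k k' (l + l') l l' F F' rfl hF hF'
end

section
/- Let W be a finite-dimensional real normed vector space and let ρ be a representation of ℝ⁺ by linear automorphisms of W such that for every w ∈ W the map λ ↦ ρ(λ)w is differentiable on (0,∞). Define the (linear) generator A : W → W by A w = (d/dλ)|_{λ=1} ρ(λ)w. If F ∈ W has almost homogeneous degree k ∈ ℝ and order l ∈ ℕ with respect to the representation F_λ = ρ(λ)F, then (A − k·id)^{l+1} F = 0. -/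
/-!
Differentiating the defining identity `ρ(μ)F = μ^k F + μ^k Σ_{j ≥ 1} (log μ)^j G_j` at `μ = 1`,
where `log 1 = 0` kills every term except the one linear in `log μ`, gives `(A - k) F = G_1` (`G 0` with the `Fin` indexing).
Since `G_1` has degree `k` and order `l - 1`, induction on the order finishes the proof.
-/

theorem hasDerivAt_rpow_const_one (k : ℝ) : HasDerivAt (fun μ : ℝ => μ ^ k) k 1 := by
  simpa using Real.hasDerivAt_rpow_const (x := 1) (p := k) (Or.inl one_ne_zero)

theorem hasDerivAt_log_pow_succ_one (n : ℕ) :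
    HasDerivAt (fun μ : ℝ => Real.log μ ^ (n + 1)) (if n = 0 then 1 else 0) 1 := by
  have h := (Real.hasDerivAt_log one_ne_zero).fun_pow (n + 1)
  rcases n.eq_zero_or_pos with rfl | hn
  · simpa using h
  · simpa [hn.ne', zero_pow hn.ne'] using h

section

variable {W : Type*} [NormedAddCommGroup W] [NormedSpace ℝ W]

theorem hasDerivAt_sum_log_pow_smul_one {l : ℕ} (G : Fin (l + 1) → W) :
    HasDerivAt (fun μ : ℝ => ∑ j : Fin (l + 1), Real.log μ ^ ((j : ℕ) + 1) • G j) (G 0) 1 := by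
  have h := HasDerivAt.fun_sum (u := Finset.univ)
    fun (j : Fin (l + 1)) _ => (hasDerivAt_log_pow_succ_one j).smul_const (G j)
  convert h using 1
  rw [Fintype.sum_eq_single 0 fun j hj => by simp [Fin.val_ne_zero_iff.mpr hj]]
  simp

variable {ρ : ℝ → W →ₗ[ℝ] W} {k : ℝ} {F : W}

theorem AlmostHom.hasDerivAt_zero (hF : AlmostHom ρ k 0 F) :
    HasDerivAt (fun μ => ρ μ F) (k • F) 1 := by
  rw [AlmostHom] at hF
  refine ((hasDerivAt_rpow_const_one k).smul_const F).congr_of_eventuallyEq ?_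
  filter_upwards [lt_mem_nhds one_pos] with μ hμ using hF μ hμ

theorem AlmostHom.exists_hasDerivAt_succ {l : ℕ} (hF : AlmostHom ρ k (l + 1) F) :
    ∃ G, AlmostHom ρ k l G ∧ HasDerivAt (fun μ => ρ μ F) (k • F + G) 1 := by
  rw [AlmostHom] at hF
  obtain ⟨G, hG, hformula⟩ := hF
  refine ⟨G 0, by simpa using hG 0, ?_⟩
  have hpow := hasDerivAt_rpow_const_one k
  have h := (hpow.smul_const F).add (hpow.smul (hasDerivAt_sum_log_pow_smul_one G))
  refine (h.congr_of_eventuallyEq ?_).congr_deriv ?_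
  · filter_upwards [lt_mem_nhds one_pos] with μ hμ using hformula μ hμ
  · simp

end

theorem almostHom_infinitesimal_general {W : Type*} [NormedAddCommGroup W] [NormedSpace ℝ W]
    (ρ : ℝ → W →ₗ[ℝ] W)
    (k : ℝ) (l : ℕ) (F : W)
    (hF : AlmostHom ρ k l F) :
    (fun w : W => deriv (fun lam : ℝ => ρ lam w) 1 - k • w)^[l + 1] F = 0 := by
  induction l generalizing F with
  | zero => simp [hF.hasDerivAt_zero.deriv]
  | succ l ih =>
    obtain ⟨G, hG, hderiv⟩ := hF.exists_hasDerivAt_succ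
    rw [Function.iterate_succ_apply, hderiv.deriv, add_sub_cancel_left]
    exact ih G hG

/-- If `W` is a finite-dimensional real normed vector space, `ρ` a representation of `ℝ⁺`
by linear automorphisms of `W` with `λ ↦ ρ(λ)w` differentiable on `(0,∞)`, and
`A w = (d/dλ)|_{λ=1} ρ(λ)w` the generator, then any `F` of almost homogeneous degree `k`
and order `l` satisfies `(A - k·id)^{l+1} F = 0`. -/
theorem almostHom_infinitesimal {W : Type*} [NormedAddCommGroup W] [NormedSpace ℝ W]
    [FiniteDimensional ℝ W]
    (ρ : ℝ → W →ₗ[ℝ] W)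
    (hone : ρ 1 = LinearMap.id)
    (hmul : ∀ lam mu : ℝ, 0 < lam → 0 < mu → ρ (lam * mu) = (ρ lam).comp (ρ mu))
    (hauto : ∀ lam : ℝ, 0 < lam → Function.Bijective (ρ lam))
    (hdiff : ∀ w : W, DifferentiableOn ℝ (fun lam : ℝ => ρ lam w) (Set.Ioi (0 : ℝ)))
    (k : ℝ) (l : ℕ) (F : W)
    (hF : AlmostHom ρ k l F) :
    (fun w : W => deriv (fun lam : ℝ => ρ lam w) 1 - k • w)^[l + 1] F = 0 :=
  almostHom_infinitesimal_general ρ k l F hF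
end

section
/- Let δ ≥ 1 be an integer, let d₁, …, d_δ be strictly positive real numbers, and let k be a real number. Let U ⊆ ℝ^δ be an open neighborhood of 0 such that for every μ ∈ (0,1] and x ∈ U the point μ^d·x := (μ^{d₁}x₁, …, μ^{d_δ}x_δ) also lies in U. Let f : U → ℝ be a smooth function satisfying f(μ^d·x) = μ^k f(x) for all μ ∈ (0,1] and x ∈ U. Then the set S = {I ∈ ℕ^δ : Σ_{i=1}^{δ} d_i I_i = k} is finite, and there exist real numbers A_I, I ∈ S, such that f(x) = Σ_{I ∈ S} A_I x^I for all x ∈ U (where x^I = x₁^{I₁}⋯x_δ^{I_δ}). In particular, if k < 0 or k ∉ {Σ d_i I_i : I ∈ ℕ^δ}, then f = 0, and in all cases f is a polynomial, weighted-homogeneous of weighted degree k with respect to the weights d_i. -/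
open MvPolynomial Filter Set Pointwise

namespace WHSP

variable {δ : ℕ}

lemma eval_hasFDerivAt (p : MvPolynomial (Fin δ) ℝ) (x : Fin δ → ℝ) :
    HasFDerivAt (fun y : Fin δ → ℝ => eval y p)
      (∑ j, eval x (pderiv j p) • ContinuousLinearMap.proj (R := ℝ) (φ := fun _ : Fin δ => ℝ) j)
      x := by
  induction p using MvPolynomial.induction_on with
  | C a =>
      simp only [eval_C, pderiv_C, map_zero, zero_smul, Finset.sum_const_zero]
      exact hasFDerivAt_const a x
  | add p q hp hq =>
      simp only [map_add, add_smul, Finset.sum_add_distrib]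
      exact hp.add hq
  | mul_X p i hp =>
      have hxi : HasFDerivAt (fun y : Fin δ → ℝ => y i)
          (ContinuousLinearMap.proj (R := ℝ) (φ := fun _ : Fin δ => ℝ) i) x :=
        hasFDerivAt_apply i x
      have h : HasFDerivAt (fun y : Fin δ → ℝ => eval y p * y i) _ x := hp.mul hxi
      have hfun : (fun y : Fin δ → ℝ => eval y (p * X i)) = fun y => eval y p * y i := by
        funext y; simp
      rw [hfun]
      convert h using 1
      · rfl
      · rfl
      have e1 : ∀ j, eval x (pderiv j (p * X i))
          = eval x (pderiv j p) * x i + (if j = i then eval x p else 0) := by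
        intro j
        rw [pderiv_mul, map_add, map_mul, eval_X]
        congr 1
        by_cases hji : j = i
        · subst hji; simp
        · rw [pderiv_X_of_ne (Ne.symm hji), mul_zero, map_zero, if_neg hji]
      ext v
      simp only [ContinuousLinearMap.sum_apply, ContinuousLinearMap.smul_apply,
        ContinuousLinearMap.proj_apply, ContinuousLinearMap.add_apply, smul_eq_mul]
      simp_rw [e1, add_mul, ite_mul, zero_mul, Finset.sum_add_distrib,
        Finset.sum_ite_eq' Finset.univ, Finset.mem_univ, if_true]
      rw [Finset.mul_sum]
      rw [Finset.sum_congr rfl (fun j _ => by ring :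
        ∀ j ∈ Finset.univ, eval x (pderiv j p) * x i * v j = x i * (eval x (pderiv j p) * v j))]
      ring

lemma euler_monomial (i : Fin δ) (s : Fin δ →₀ ℕ) (c : ℝ) (x : Fin δ → ℝ) :
    x i * eval x (pderiv i (monomial s c)) = (s i : ℝ) * eval x (monomial s c) := by
  rw [pderiv_monomial, eval_monomial, eval_monomial]
  rcases Nat.eq_zero_or_pos (s i) with h | h
  · simp [h]
  · rw [Finsupp.prod_pow, Finsupp.prod_pow]
    rw [← Finset.mul_prod_erase Finset.univ _ (Finset.mem_univ i),
        ← Finset.mul_prod_erase Finset.univ (fun j => x j ^ s j) (Finset.mem_univ i)]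
    have h1 : ((s - Finsupp.single i 1 : Fin δ →₀ ℕ)) i = s i - 1 := by
      rw [Finsupp.tsub_apply, Finsupp.single_eq_same]
    have h2 : ∀ j ∈ Finset.univ.erase i,
        x j ^ ((s - Finsupp.single i 1 : Fin δ →₀ ℕ)) j = x j ^ s j := by
      intro j hj
      rw [Finsupp.tsub_apply, Finsupp.single_eq_of_ne' (Ne.symm (Finset.ne_of_mem_erase hj)),
        Nat.sub_zero]
    rw [Finset.prod_congr rfl h2, h1]
    have hxx : x i ^ (s i - 1) * x i = x i ^ s i := by
      rw [← pow_succ, Nat.sub_add_cancel h]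
    calc x i * (c * ↑(s i) * (x i ^ (s i - 1) * ∏ j ∈ Finset.univ.erase i, x j ^ s j))
        = (c * ↑(s i)) * ((x i ^ (s i - 1) * x i) * ∏ j ∈ Finset.univ.erase i, x j ^ s j) := by
          ring
      _ = ↑(s i) * (c * (x i ^ s i * ∏ j ∈ Finset.univ.erase i, x j ^ s j)) := by
          rw [hxx]; ring

lemma euler_eval (d : Fin δ → ℝ) (k : ℝ) (p : MvPolynomial (Fin δ) ℝ)
    (hp : ∀ I ∈ p.support, (∑ i, d i * (I i : ℝ)) = k) (x : Fin δ → ℝ) :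
    ∑ i, d i * (x i * eval x (pderiv i p)) = k * eval x p := by
  have hps := p.as_sum
  calc ∑ i, d i * (x i * eval x (pderiv i p))
      = ∑ i, ∑ I ∈ p.support, d i * (x i * eval x (pderiv i (monomial I (coeff I p)))) := by
        refine Finset.sum_congr rfl fun i _ => ?_
        conv_lhs => rw [hps]
        rw [map_sum, map_sum, Finset.mul_sum, Finset.mul_sum]
    _ = ∑ I ∈ p.support, ∑ i, d i * ((I i : ℝ) * eval x (monomial I (coeff I p))) := by
        rw [Finset.sum_comm]
        exact Finset.sum_congr rfl fun I _ => Finset.sum_congr rfl fun i _ => by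
          rw [euler_monomial]
    _ = ∑ I ∈ p.support, k * eval x (monomial I (coeff I p)) := by
        refine Finset.sum_congr rfl fun I hI => ?_
        simp_rw [← mul_assoc]
        rw [← Finset.sum_mul, hp I hI]
    _ = k * eval x p := by
        rw [← Finset.mul_sum]
        congr 1
        conv_rhs => rw [hps]
        rw [map_sum]

lemma clm_eq_of_single (L M : (Fin δ → ℝ) →L[ℝ] ℝ)
    (h : ∀ j, L (Pi.single j 1) = M (Pi.single j 1)) : L = M := by
  ext v
  have hv : v = ∑ j, v j • (Pi.single j (1:ℝ) : Fin δ → ℝ) := by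
    funext i
    simp [Finset.sum_apply, Pi.single_apply]
  conv_lhs => rw [hv]
  conv_rhs => rw [hv]
  rw [map_sum, map_sum]
  exact Finset.sum_congr rfl fun j _ => by rw [map_smul, map_smul, h j]

lemma fderiv_eval_single (q : MvPolynomial (Fin δ) ℝ) (j : Fin δ) (z : Fin δ → ℝ) :
    fderiv ℝ (fun y => eval y q) z (Pi.single j 1) = eval z (pderiv j q) := by
  rw [(eval_hasFDerivAt q z).fderiv]
  simp only [ContinuousLinearMap.sum_apply, ContinuousLinearMap.smul_apply,
    ContinuousLinearMap.proj_apply, smul_eq_mul]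
  have : ∀ l : Fin δ, eval z (pderiv l q) * (Pi.single j (1:ℝ) : Fin δ → ℝ) l
      = if l = j then eval z (pderiv j q) else 0 := by
    intro l
    by_cases h : l = j
    · subst h; simp
    · simp [Pi.single_eq_of_ne h, h]
  simp_rw [this]
  rw [Finset.sum_ite_eq' Finset.univ, if_pos (Finset.mem_univ j)]

lemma const_eq_limit {h : ℝ → ℝ} {c L : ℝ}
    (h1 : ∀ μ ∈ Set.Ioc (0:ℝ) 1, h μ = c)
    (h2 : Tendsto h (nhdsWithin 0 (Set.Ioc (0:ℝ) 1)) (nhds L)) : c = L := by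
  have hne : (nhdsWithin (0:ℝ) (Set.Ioc (0:ℝ) 1)).NeBot := by
    rw [← mem_closure_iff_nhdsWithin_neBot, closure_Ioc (zero_ne_one)]
    exact ⟨le_refl 0, zero_le_one⟩
  have hE : h =ᶠ[nhdsWithin (0:ℝ) (Set.Ioc (0:ℝ) 1)] fun _ => c := by
    filter_upwards [self_mem_nhdsWithin] with μ hμ using h1 μ hμ
  exact (tendsto_nhds_unique (Filter.Tendsto.congr' hE h2) tendsto_const_nhds).symm

lemma curve_tendsto (d : Fin δ → ℝ) (hd : ∀ i, 0 < d i) (x : Fin δ → ℝ) :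
    Tendsto (fun μ : ℝ => (fun i => μ ^ d i * x i : Fin δ → ℝ))
      (nhdsWithin 0 (Set.Ioc (0:ℝ) 1)) (nhds 0) := by
  rw [tendsto_pi_nhds]
  intro i
  have h0 : Tendsto (fun μ : ℝ => μ ^ d i) (nhds 0) (nhds 0) := by
    have := Real.continuousAt_rpow_const 0 (d i) (Or.inr (hd i).le)
    simpa [ContinuousAt, Real.zero_rpow (hd i).ne'] using this
  have h1 : Tendsto (fun μ : ℝ => μ ^ d i * x i) (nhdsWithin (0:ℝ) (Set.Ioc (0:ℝ) 1))
      (nhds (0 * x i)) := (h0.mono_left nhdsWithin_le_nhds).mul_const (x i)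
  simpa using h1

lemma neg_case (d : Fin δ → ℝ) (hd : ∀ i, 0 < d i)
    (U : Set (Fin δ → ℝ)) (hUopen : IsOpen U) (hU0 : (0 : Fin δ → ℝ) ∈ U)
    (k : ℝ) (hk : k < 0) (f : (Fin δ → ℝ) → ℝ) (hfc : ContinuousOn f U)
    (hhom : ∀ μ ∈ Set.Ioc (0 : ℝ) 1, ∀ x ∈ U, f (fun i => μ ^ d i * x i) = μ ^ k * f x) :
    ∀ x ∈ U, f x = 0 := by
  intro x hx
  have hcurve : Tendsto (fun μ : ℝ => f (fun i => μ ^ d i * x i))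
      (nhdsWithin 0 (Set.Ioc (0:ℝ) 1)) (nhds (f 0)) :=
    (hfc.continuousAt (hUopen.mem_nhds hU0)).tendsto.comp (curve_tendsto d hd x)
  have hpow : Tendsto (fun μ : ℝ => μ ^ (-k)) (nhdsWithin 0 (Set.Ioc (0:ℝ) 1)) (nhds 0) := by
    have h2 : Tendsto (fun μ : ℝ => μ ^ (-k)) (nhds 0) (nhds ((0:ℝ) ^ (-k))) :=
      Real.continuousAt_rpow_const 0 (-k) (Or.inr (by linarith))
    rw [Real.zero_rpow (by linarith : -k ≠ 0)] at h2
    exact h2.mono_left nhdsWithin_le_nhds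
  refine const_eq_limit (h := fun μ => μ ^ (-k) * f (fun i => μ ^ d i * x i))
    (c := f x) (L := 0) ?_ ?_
  · intro μ hμ
    show μ ^ (-k) * f (fun i => μ ^ d i * x i) = f x
    rw [hhom μ hμ x hx, ← mul_assoc, ← Real.rpow_add hμ.1, neg_add_cancel, Real.rpow_zero,
      one_mul]
  · simpa using hpow.mul hcurve

end WHSP

namespace WHSP

lemma main (δ : ℕ) (d : Fin δ → ℝ) (hd : ∀ i, 0 < d i) (c : ℝ) (hc : 0 < c)
    (hcd : ∀ i, c ≤ d i) (U : Set (Fin δ → ℝ)) (hUopen : IsOpen U)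
    (hU0 : (0 : Fin δ → ℝ) ∈ U)
    (hUscale : ∀ μ ∈ Set.Ioc (0 : ℝ) 1, ∀ x ∈ U, (fun i => μ ^ d i * x i) ∈ U) :
    ∀ (n : ℕ) (k : ℝ), k < n * c → ∀ f : (Fin δ → ℝ) → ℝ,
      ContDiffOn ℝ ((⊤ : ℕ∞) : WithTop ℕ∞) f U →
      (∀ μ ∈ Set.Ioc (0 : ℝ) 1, ∀ x ∈ U, f (fun i => μ ^ d i * x i) = μ ^ k * f x) →
      ∃ p : MvPolynomial (Fin δ) ℝ,
        (∀ I ∈ p.support, (∑ i, d i * (I i : ℝ)) = k) ∧ ∀ x ∈ U, f x = eval x p := by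
  intro n
  induction n with
  | zero =>
    intro k hk f hf hhom
    refine ⟨0, by simp, fun x hx => ?_⟩
    rw [map_zero]
    exact neg_case d hd U hUopen hU0 k (by simpa using hk) f hf.continuousOn hhom x hx
  | succ n ih =>
    intro k hk f hf hhom
    rcases lt_trichotomy k 0 with hk0 | hk0 | hk0
    · refine ⟨0, by simp, fun x hx => ?_⟩
      rw [map_zero]
      exact neg_case d hd U hUopen hU0 k hk0 f hf.continuousOn hhom x hx
    · -- k = 0 : f is constant
      subst hk0
      refine ⟨C (f 0), ?_, fun x hx => ?_⟩
      · intro I hI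
        rw [mem_support_iff, coeff_C] at hI
        by_cases h0 : I = 0
        · subst h0; simp
        · exfalso; exact hI (by rw [if_neg (by exact fun hc' => h0 hc'.symm)])
      · rw [eval_C]
        refine const_eq_limit (h := fun μ => f (fun i => μ ^ d i * x i)) ?_ ?_
        · intro μ hμ
          show f (fun i => μ ^ d i * x i) = f x
          rw [hhom μ hμ x hx, Real.rpow_zero, one_mul]
        · exact (hf.continuousOn.continuousAt (hUopen.mem_nhds hU0)).tendsto.comp
            (curve_tendsto d hd x)
    · -- k > 0
      have hdiffAt : ∀ x ∈ U, DifferentiableAt ℝ f x := fun x hx =>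
        (hf.contDiffAt (hUopen.mem_nhds hx)).differentiableAt (by simp)
      obtain ⟨hfdiffOn, hf'⟩ := (contDiffOn_infty_iff_fderiv_of_isOpen hUopen).mp hf
      have hf'diff : ∀ x ∈ U, DifferentiableAt ℝ (fderiv ℝ f) x := fun x hx =>
        (hf'.contDiffAt (hUopen.mem_nhds hx)).differentiableAt (by simp)
      set g : Fin δ → (Fin δ → ℝ) → ℝ := fun j x => fderiv ℝ f x (Pi.single j 1) with hg
      have hg_smooth : ∀ j, ContDiffOn ℝ ((⊤:ℕ∞) : WithTop ℕ∞) (g j) U := fun j =>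
        hf'.clm_apply contDiffOn_const
      have hghom : ∀ j, ∀ μ ∈ Set.Ioc (0:ℝ) 1, ∀ x ∈ U,
          g j (fun i => μ ^ d i * x i) = μ ^ (k - d j) * g j x := by
        intro j μ hμ x hx
        set L : (Fin δ → ℝ) →L[ℝ] (Fin δ → ℝ) :=
          ContinuousLinearMap.pi (fun i => (μ ^ d i) • ContinuousLinearMap.proj i) with hL
        have hLfun : ∀ y : Fin δ → ℝ, (fun i => μ ^ d i * y i) = L y := by
          intro y; funext i
          simp [hL]
        have hLU : L x ∈ U := by rw [← hLfun]; exact hUscale μ hμ x hx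
        have hEq : (fun y => f (L y)) =ᶠ[nhds x] fun y => μ ^ k * f y := by
          filter_upwards [hUopen.mem_nhds hx] with y hy
          rw [← hLfun y]; exact hhom μ hμ y hy
        have hder1 : HasFDerivAt (fun y => f (L y)) ((fderiv ℝ f (L x)).comp L) x :=
          (hdiffAt _ hLU).hasFDerivAt.comp x L.hasFDerivAt
        have hder2 : HasFDerivAt (fun y => μ ^ k * f y) ((μ ^ k) • fderiv ℝ f x) x :=
          (hdiffAt x hx).hasFDerivAt.const_mul (μ ^ k)
        have hder1' : HasFDerivAt (fun y => μ ^ k * f y) ((fderiv ℝ f (L x)).comp L) x :=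
          hder1.congr_of_eventuallyEq hEq.symm
        have hLMeq := hder1'.unique hder2
        have happ := congrArg (fun T : (Fin δ → ℝ) →L[ℝ] ℝ => T (Pi.single j 1)) hLMeq
        simp only [ContinuousLinearMap.comp_apply, ContinuousLinearMap.smul_apply,
          smul_eq_mul] at happ
        have hLsingle : L (Pi.single j 1) = (μ ^ d j) • (Pi.single j 1 : Fin δ → ℝ) := by
          funext i
          by_cases hij : i = j
          · subst hij; simp [hL]
          · simp [hL, Pi.single_eq_of_ne hij]
        rw [hLsingle, map_smul, smul_eq_mul] at happ
        have hμd : (0:ℝ) < μ ^ d j := Real.rpow_pos_of_pos hμ.1 _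
        show g j (fun i => μ ^ d i * x i) = μ ^ (k - d j) * g j x
        rw [hLfun x, Real.rpow_sub hμ.1, div_mul_eq_mul_div, eq_div_iff hμd.ne', mul_comm]
        exact happ
      have hkbound : ∀ j, k - d j < n * c := by
        intro j
        have h1 := hcd j
        have h2 : (↑(n+1) : ℝ) * c = ↑n * c + c := by push_cast; ring
        rw [h2] at hk
        linarith
      choose p hp1 hp2 using fun j => ih (k - d j) (hkbound j) (g j) (hg_smooth j) (hghom j)
      have hf0 : f 0 = 0 := by
        have h2 := hhom (1/2) (by norm_num) 0 hU0
        have hz : (fun i => (1/2:ℝ) ^ d i * (0 : Fin δ → ℝ) i) = (0 : Fin δ → ℝ) := by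
          funext i; simp
        rw [hz] at h2
        have hlt : ((1:ℝ)/2) ^ (k:ℝ) < 1 := Real.rpow_lt_one (by norm_num) (by norm_num) hk0
        have hfac : f 0 * (1 - (1/2:ℝ) ^ (k:ℝ)) = 0 := by linarith [h2]
        rcases mul_eq_zero.mp hfac with h | h
        · exact h
        · exfalso; linarith
      set P : MvPolynomial (Fin δ) ℝ := C k⁻¹ * ∑ j, C (d j) * (X j * p j) with hP
      have hPsupp : ∀ I ∈ P.support, (∑ i, d i * (I i : ℝ)) = k := by
        intro I hI
        rw [hP] at hI
        have h1 : I ∈ (∑ j, C (d j) * (X j * p j)).support := by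
          rw [mem_support_iff] at hI ⊢
          intro hzero
          rw [coeff_C_mul, hzero, mul_zero] at hI
          exact hI rfl
        obtain ⟨j, -, hj⟩ := Finset.mem_biUnion.mp (MvPolynomial.support_sum h1)
        have h3 : I ∈ (X j * p j).support := by
          rw [mem_support_iff] at hj ⊢
          intro hzero
          rw [coeff_C_mul, hzero, mul_zero] at hj
          exact hj rfl
        have h4 := MvPolynomial.support_mul _ _ h3
        rw [Finset.mem_add] at h4
        obtain ⟨a, ha, b, hb, hab⟩ := h4
        rw [MvPolynomial.support_X, Finset.mem_singleton] at ha
        subst ha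
        have hdeg := hp1 j b hb
        rw [← hab]
        have hterm : ∀ i, (((Finsupp.single j 1 + b : Fin δ →₀ ℕ)) i : ℝ)
            = (if i = j then 1 else 0) + (b i : ℝ) := by
          intro i
          rw [Finsupp.add_apply, Finsupp.single_apply]
          by_cases h : i = j
          · subst h; simp
          · rw [if_neg (fun hc' => h hc'.symm), if_neg h]; push_cast; ring
        simp_rw [hterm, mul_add]
        rw [Finset.sum_add_distrib, hdeg]
        have hsum1 : (∑ i, d i * (if i = j then (1:ℝ) else 0)) = d j := by
          simp [mul_ite]
        rw [hsum1]
        ring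
      have hsym : ∀ x, x ∈ U → ∀ a b : Fin δ,
          eval x (pderiv b (p a)) = eval x (pderiv a (p b)) := by
        intro x hx a b
        have hcong : ∀ a : Fin δ, fderiv ℝ (fun y => eval y (p a)) x = fderiv ℝ (g a) x := by
          intro a
          apply Filter.EventuallyEq.fderiv_eq
          filter_upwards [hUopen.mem_nhds hx] with y hy using (hp2 a y hy).symm
        have hga : ∀ a : Fin δ, fderiv ℝ (g a) x
            = (fderiv ℝ (fderiv ℝ f) x).flip (Pi.single a 1) := by
          intro a
          rw [hg]
          rw [fderiv_clm_apply (hf'diff x hx) (differentiableAt_const _)]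
          simp
        have hsecond := second_derivative_symmetric_of_eventually
          (f := f) (f' := fderiv ℝ f) (x := x) (f'' := fderiv ℝ (fderiv ℝ f) x)
          (by filter_upwards [hUopen.mem_nhds hx] with y hy using (hdiffAt y hy).hasFDerivAt)
          (hf'diff x hx).hasFDerivAt (Pi.single b 1) (Pi.single a 1)
        calc eval x (pderiv b (p a))
            = fderiv ℝ (fun y => eval y (p a)) x (Pi.single b 1) :=
              (fderiv_eval_single _ _ _).symm
          _ = fderiv ℝ (g a) x (Pi.single b 1) := by rw [hcong a]
          _ = fderiv ℝ (fderiv ℝ f) x (Pi.single b 1) (Pi.single a 1) := by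
              rw [hga a, ContinuousLinearMap.flip_apply]
          _ = fderiv ℝ (fderiv ℝ f) x (Pi.single a 1) (Pi.single b 1) := hsecond
          _ = fderiv ℝ (g b) x (Pi.single a 1) := by
              rw [hga b, ContinuousLinearMap.flip_apply]
          _ = fderiv ℝ (fun y => eval y (p b)) x (Pi.single a 1) := by rw [hcong b]
          _ = eval x (pderiv a (p b)) := fderiv_eval_single _ _ _
      have hkey : ∀ x, x ∈ U → ∀ j, eval x (pderiv j P) = g j x := by
        intro x hx j
        rw [hp2 j x hx]
        have expand : eval x (pderiv j P) = k⁻¹ * ∑ l, d l *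
            (eval x (pderiv j (X l)) * eval x (p l) + x l * eval x (pderiv j (p l))) := by
          rw [hP, pderiv_C_mul, map_mul, eval_C, map_sum, map_sum]
          congr 1
          refine Finset.sum_congr rfl fun l _ => ?_
          rw [pderiv_C_mul, map_mul, eval_C, pderiv_mul, map_add, map_mul, map_mul, eval_X]
        rw [expand]
        have hjterm : ∀ l, eval x (pderiv j (X l)) = if l = j then (1:ℝ) else 0 := by
          intro l
          by_cases h : l = j
          · subst h; rw [pderiv_X_self, map_one, if_pos rfl]
          · rw [pderiv_X_of_ne h, map_zero, if_neg h]
        have hsymm_sub : ∀ l, eval x (pderiv j (p l)) = eval x (pderiv l (p j)) :=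
          fun l => hsym x hx l j
        simp_rw [hjterm, hsymm_sub, mul_add]
        rw [Finset.sum_add_distrib]
        have hsum1 : (∑ l, d l * ((if l = j then (1:ℝ) else 0) * eval x (p l)))
            = d j * eval x (p j) := by
          simp [ite_mul, mul_ite]
        have hsum2 := euler_eval d (k - d j) (p j) (hp1 j) x
        have hsum2' : (∑ l, d l * (x l * eval x (pderiv l (p j))))
            = (k - d j) * eval x (p j) := hsum2
        rw [hsum1, hsum2']
        field_simp
        ring
      have hevalP_diff : ∀ z, DifferentiableAt ℝ (fun y => eval y P) z := fun z =>
        (eval_hasFDerivAt P z).differentiableAt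
      have hF0 : ∀ z, z ∈ U → fderiv ℝ (fun y => f y - eval y P) z = 0 := by
        intro z hz
        rw [fderiv_fun_sub (hdiffAt z hz) (hevalP_diff z)]
        have h1 : fderiv ℝ (fun y => eval y P) z = fderiv ℝ f z := by
          apply clm_eq_of_single
          intro j
          rw [fderiv_eval_single, hkey z hz j]
        rw [h1, sub_self]
      refine ⟨P, hPsupp, fun x hx => ?_⟩
      set F : (Fin δ → ℝ) → ℝ := fun y => f y - eval y P with hFdef
      have hFdiffAt : ∀ z, z ∈ U → DifferentiableAt ℝ F z := fun z hz =>
        (hdiffAt z hz).sub (hevalP_diff z)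
      have hγ : ∀ μ : ℝ, 0 < μ →
          HasDerivAt (fun ν : ℝ => (fun i => ν ^ d i * x i : Fin δ → ℝ))
            (fun i => d i * μ ^ (d i - 1) * x i) μ := by
        intro μ hμ
        rw [hasDerivAt_pi]
        intro i
        exact (Real.hasDerivAt_rpow_const (Or.inl hμ.ne')).mul_const (x i)
      have hconst : ∀ μ ∈ Set.Ioc (0:ℝ) 1, F (fun i => μ ^ d i * x i) = F x := by
        intro μ hμ
        have key : ∀ ν ∈ Set.Ioc (0:ℝ) 1,
            fderivWithin ℝ (fun ν : ℝ => F (fun i => ν ^ d i * x i)) (Set.Ioc (0:ℝ) 1) ν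
              = 0 := by
          intro ν hν
          have hmem : (fun i => ν ^ d i * x i) ∈ U := hUscale ν hν x hx
          have hDA : HasDerivAt (fun ν : ℝ => F (fun i => ν ^ d i * x i))
              ((fderiv ℝ F (fun i => ν ^ d i * x i)) (fun i => d i * ν ^ (d i - 1) * x i))
              ν := by
            have h := (hFdiffAt _ hmem).hasFDerivAt.comp_hasDerivAt ν (hγ ν hν.1)
            exact h
          rw [hF0 _ hmem] at hDA
          simp only [ContinuousLinearMap.zero_apply] at hDA
          have hw := (hDA.hasFDerivAt.hasFDerivWithinAt
            (s := Set.Ioc (0:ℝ) 1)).fderivWithin ((uniqueDiffOn_Ioc 0 1) ν hν)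
          rw [hw]
          ext t
          simp
        have hdiffOn : DifferentiableOn ℝ (fun ν : ℝ => F (fun i => ν ^ d i * x i))
            (Set.Ioc (0:ℝ) 1) := by
          intro ν hν
          exact (((hFdiffAt _ (hUscale ν hν x hx)).hasFDerivAt.comp_hasDerivAt ν
            (hγ ν hν.1)).differentiableAt).differentiableWithinAt
        have hcc := (convex_Ioc (0:ℝ) 1).is_const_of_fderivWithin_eq_zero hdiffOn key hμ
          (Set.right_mem_Ioc.mpr one_pos)
        have h1 : (fun i => (1:ℝ) ^ d i * x i) = x := by
          funext i; simp [Real.one_rpow]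
        rwa [h1] at hcc
      have hFcont : ContinuousOn F U := by
        apply ContinuousOn.sub hf.continuousOn
        exact (continuous_iff_continuousAt.mpr fun z =>
          (hevalP_diff z).continuousAt).continuousOn
      have hlim : Tendsto (fun μ : ℝ => F (fun i => μ ^ d i * x i))
          (nhdsWithin 0 (Set.Ioc (0:ℝ) 1)) (nhds (F 0)) :=
        (hFcont.continuousAt (hUopen.mem_nhds hU0)).tendsto.comp (curve_tendsto d hd x)
      have hFx := const_eq_limit hconst hlim
      have heval0 : eval (0 : Fin δ → ℝ) P = 0 := by
        rw [eval_eq']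
        refine Finset.sum_eq_zero fun I hI => ?_
        have hIne : ∃ i, I i ≠ 0 := by
          by_contra hcon
          push_neg at hcon
          have hI0 : I = 0 := Finsupp.ext hcon
          rw [hI0] at hI
          have := hPsupp 0 hI
          simp at this
          linarith
        obtain ⟨i, hi⟩ := hIne
        rw [Finset.prod_eq_zero (Finset.mem_univ i) (zero_pow hi), mul_zero]
      have hF00 : F 0 = 0 := by
        show f 0 - eval 0 P = 0
        rw [hf0, heval0, sub_zero]
      have hFxz : F x = 0 := by rw [hFx, hF00]
      have : f x - eval x P = 0 := hFxz
      linarith [this]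

end WHSP

/-- A smooth function on a neighborhood of `0` in `ℝ^δ` that is weighted-homogeneous of
degree `k` with respect to strictly positive weights `d₁, …, d_δ` (i.e.
`f(μ^{d₁}x₁, …, μ^{d_δ}x_δ) = μ^k f(x)` for `μ ∈ (0,1]`) is a weighted-homogeneous
polynomial: the set `S = {I ∈ ℕ^δ : Σ d_i I_i = k}` is finite and
`f(x) = Σ_{I ∈ S} A_I x^I`. -/
theorem weighted_homogeneous_smooth_is_polynomial
    (δ : ℕ) (hδ : 1 ≤ δ) (d : Fin δ → ℝ) (hd : ∀ i, 0 < d i) (k : ℝ)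
    (U : Set (Fin δ → ℝ)) (hUopen : IsOpen U) (hU0 : (0 : Fin δ → ℝ) ∈ U)
    (hUscale : ∀ μ ∈ Set.Ioc (0 : ℝ) 1, ∀ x ∈ U, (fun i => μ ^ d i * x i) ∈ U)
    (f : (Fin δ → ℝ) → ℝ) (hf : ContDiffOn ℝ (⊤ : ℕ∞) f U)
    (hhom : ∀ μ ∈ Set.Ioc (0 : ℝ) 1, ∀ x ∈ U,
      f (fun i => μ ^ d i * x i) = μ ^ k * f x) :
    ∃ hfin : {I : Fin δ → ℕ | ∑ i, d i * (I i : ℝ) = k}.Finite,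
      ∃ A : (Fin δ → ℕ) → ℝ,
        ∀ x ∈ U, f x = ∑ I ∈ hfin.toFinset, A I * ∏ i, x i ^ (I i) := by
  -- finiteness of the index set
  have hfin : {I : Fin δ → ℕ | ∑ i, d i * (I i : ℝ) = k}.Finite := by
    apply Set.Finite.subset (Set.Finite.pi (fun i : Fin δ => Set.finite_Iic (⌊k / d i⌋₊)))
    intro I hI
    simp only [Set.mem_setOf_eq] at hI
    rw [Set.mem_pi]
    intro i _
    have hle : d i * (I i : ℝ) ≤ k := by
      rw [← hI]
      exact Finset.single_le_sum (f := fun i => d i * (I i : ℝ))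
        (fun j _ => mul_nonneg (hd j).le (Nat.cast_nonneg _)) (Finset.mem_univ i)
    have : (I i : ℝ) ≤ k / d i := by
      rw [le_div_iff₀ (hd i)]
      linarith [hle]
    exact Nat.le_floor this
  -- apply the main induction
  have : Nonempty (Fin δ) := ⟨⟨0, hδ⟩⟩
  set c : ℝ := Finset.univ.inf' Finset.univ_nonempty d with hcdef
  have hc : 0 < c := by
    rw [hcdef, Finset.lt_inf'_iff]
    exact fun i _ => hd i
  have hcd : ∀ i, c ≤ d i := fun i => Finset.inf'_le _ (Finset.mem_univ i)
  obtain ⟨n, hn⟩ := exists_nat_gt (k / c)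
  have hkn : k < n * c := by
    rw [div_lt_iff₀ hc] at hn
    exact hn
  obtain ⟨p, hp1, hp2⟩ := WHSP.main δ d hd c hc hcd U hUopen hU0 hUscale n k hkn f
    (hf.of_le (by simp)) hhom
  refine ⟨hfin, fun I => coeff (Finsupp.equivFunOnFinite.symm I) p, fun x hx => ?_⟩
  rw [hp2 x hx, eval_eq']
  have key1 : ∑ J ∈ p.support, coeff J p * ∏ i, x i ^ J i
      = ∑ I ∈ p.support.image (fun J : Fin δ →₀ ℕ => (J : Fin δ → ℕ)),
          coeff (Finsupp.equivFunOnFinite.symm I) p * ∏ i, x i ^ I i := by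
    rw [Finset.sum_image (fun a _ b _ hab => DFunLike.coe_injective hab)]
    refine Finset.sum_congr rfl fun J _ => ?_
    rw [Finsupp.equivFunOnFinite_symm_coe]
  rw [key1]
  apply Finset.sum_subset
  · intro I hI
    obtain ⟨J, hJ, rfl⟩ := Finset.mem_image.mp hI
    rw [Set.Finite.mem_toFinset]
    exact hp1 J hJ
  · intro I hIt hIn
    have hc0 : coeff (Finsupp.equivFunOnFinite.symm I) p = 0 := by
      by_contra hne
      apply hIn
      rw [Finset.mem_image]
      refine ⟨Finsupp.equivFunOnFinite.symm I, mem_support_iff.mpr hne, ?_⟩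
      exact Finsupp.equivFunOnFinite.apply_symm_apply I
    rw [hc0, zero_mul]
end

section
/- Let W be a real vector space with a linear representation of ℝ⁺, written F ↦ F_λ. Let k ∈ ℝ, l ∈ ℕ, and suppose G₀, G₁, …, G_l ∈ W satisfy (G₀)_λ = λ^k Σ_{j=0}^{l} (log λ)^j G_j for all λ ∈ ℝ⁺. Then for every i with 0 ≤ i ≤ l and every μ ∈ ℝ⁺ one has (G_i)_μ = μ^k Σ_{j=i}^{l} binom(j, i) (log μ)^{j−i} G_j, where binom(j, i) is the binomial coefficient. In particular each G_i has almost homogeneous degree k and order l − i, and hence G₀ has almost homogeneous degree k and order l in the recursive sense. -/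
open Finset

theorem eq_zero_of_forall_sum_pow_smul_eq_zero {K W : Type*} [Field K] [Infinite K]
    [AddCommGroup W] [Module K W] {n : ℕ} {v : ℕ → W}
    (h : ∀ t : K, ∑ j ∈ range n, t ^ j • v j = 0) {j : ℕ} (hj : j < n) : v j = 0 := by
  rw [← Module.forall_dual_apply_eq_zero_iff K]
  intro φ
  let p : Polynomial K := ∑ m ∈ range n, Polynomial.monomial m (φ (v m))
  have hp : p = 0 := Polynomial.zero_of_eval_zero p fun t => by
    simpa [p, Polynomial.eval_finsetSum, mul_comm] using congrArg φ (h t)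
  simpa [p, Polynomial.finsetSum_coeff, Polynomial.coeff_monomial, hj] using
    congrArg (Polynomial.coeff · j) hp

theorem sum_add_pow_smul_eq_sum_pow_smul {R M : Type*} [CommSemiring R] [AddCommMonoid M]
    [Module R M] (s t : R) (v : ℕ → M) (l : ℕ) :
    ∑ j ∈ range (l + 1), (s + t) ^ j • v j =
      ∑ i ∈ range (l + 1), t ^ i • ∑ j ∈ Icc i l, ((j.choose i : R) * s ^ (j - i)) • v j := by
  have hmem : ∀ j i, j ∈ range (l + 1) ∧ i ∈ range (j + 1) ↔ j ∈ Icc i l ∧ i ∈ range (l + 1) := by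
    intro j i
    simp only [mem_range, mem_Icc]
    omega
  calc ∑ j ∈ range (l + 1), (s + t) ^ j • v j
      = ∑ j ∈ range (l + 1), ∑ i ∈ range (j + 1), (t ^ i * s ^ (j - i) * j.choose i) • v j := by
        simp only [add_comm s t, add_pow, sum_smul]
    _ = ∑ i ∈ range (l + 1), ∑ j ∈ Icc i l, (t ^ i * s ^ (j - i) * j.choose i) • v j :=
        sum_comm' hmem
    _ = _ := by
        simp only [smul_sum, smul_smul]
        refine sum_congr rfl fun i _ => sum_congr rfl fun j _ => congrArg (· • v j) ?_
        ring

theorem sum_Icc_eq_add_sum_fin {M : Type*} [AddCommMonoid M] {i l : ℕ} (hil : i ≤ l)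
    (f : ℕ → M) : ∑ j ∈ Icc i l, f j = f i + ∑ j : Fin (l - i), f (i + 1 + j) := by
  rw [← Ico_add_one_right_eq_Icc, sum_eq_sum_Ico_succ_bot (by omega),
    sum_Ico_eq_sum_range, Nat.add_sub_add_right,
    Fin.sum_univ_eq_sum_range (fun j => f (i + 1 + j))]

theorem almostHom_smul {W : Type*} [AddCommGroup W] [Module ℝ W] (act : ℝ → W →ₗ[ℝ] W)
    (k : ℝ) (l : ℕ) {F : W} (hF : AlmostHom act k l F) (c : ℝ) :
    AlmostHom act k l (c • F) := by
  induction l using Nat.strong_induction_on generalizing F with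
  | _ l ih =>
    cases l with
    | zero =>
      rw [AlmostHom] at hF ⊢
      intro μ hμ
      rw [map_smul, hF μ hμ, smul_comm]
    | succ m =>
      rw [AlmostHom] at hF ⊢
      obtain ⟨G, hG, hact⟩ := hF
      refine ⟨fun j => c • G j, fun j => ih _ (by omega) (hG j), fun μ hμ => ?_⟩
      simp only [map_smul, hact μ hμ, smul_add, smul_sum, smul_comm c]

section Transform

variable {W : Type*} [AddCommGroup W] [Module ℝ W] {act : ℝ → W →ₗ[ℝ] W} {k : ℝ} {l : ℕ}
  {G : ℕ → W}

theorem sum_pow_smul_act_eq (hmul : ∀ lam mu : ℝ, 0 < lam → 0 < mu →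
      act (lam * mu) = (act lam).comp (act mu))
    (hexp : ∀ lam : ℝ, 0 < lam →
      act lam (G 0) = lam ^ k • ∑ j ∈ range (l + 1), (Real.log lam ^ j) • G j)
    {mu : ℝ} (hmu : 0 < mu) (t : ℝ) :
    ∑ j ∈ range (l + 1), t ^ j • act mu (G j) =
      mu ^ k • ∑ j ∈ range (l + 1), (Real.log mu + t) ^ j • G j := by
  have hlam : 0 < Real.exp t := Real.exp_pos t
  apply smul_right_injective W (Real.rpow_pos_of_pos hlam k).ne'
  calc Real.exp t ^ k • ∑ j ∈ range (l + 1), t ^ j • act mu (G j)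
      = act mu (act (Real.exp t) (G 0)) := by
        simp only [hexp _ hlam, Real.log_exp, map_smul, map_sum]
    _ = act (mu * Real.exp t) (G 0) := by rw [hmul _ _ hmu hlam, LinearMap.comp_apply]
    _ = _ := by
        rw [hexp _ (mul_pos hmu hlam), Real.log_mul hmu.ne' hlam.ne', Real.log_exp,
          Real.mul_rpow hmu.le hlam.le, mul_comm, mul_smul]

theorem act_eq_sum_choose_smul (hmul : ∀ lam mu : ℝ, 0 < lam → 0 < mu →
      act (lam * mu) = (act lam).comp (act mu))
    (hexp : ∀ lam : ℝ, 0 < lam →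
      act lam (G 0) = lam ^ k • ∑ j ∈ range (l + 1), (Real.log lam ^ j) • G j)
    {mu : ℝ} (hmu : 0 < mu) {i : ℕ} (hi : i ≤ l) :
    act mu (G i) = mu ^ k • ∑ j ∈ Icc i l,
      ((j.choose i : ℝ) * Real.log mu ^ (j - i)) • G j := by
  refine sub_eq_zero.mp (eq_zero_of_forall_sum_pow_smul_eq_zero (K := ℝ) (n := l + 1)
    (v := fun i => act mu (G i) - mu ^ k • ∑ j ∈ Icc i l,
      ((j.choose i : ℝ) * Real.log mu ^ (j - i)) • G j) (fun t => ?_) (by omega))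
  simp only [smul_sub, sum_sub_distrib]
  rw [sub_eq_zero, sum_pow_smul_act_eq hmul hexp hmu,
    sum_add_pow_smul_eq_sum_pow_smul, smul_sum]
  simp only [smul_comm (mu ^ k)]

theorem almostHom_of_act_eq_sum_choose_smul
    (htrans : ∀ i ≤ l, ∀ mu : ℝ, 0 < mu → act mu (G i) = mu ^ k • ∑ j ∈ Icc i l,
      ((j.choose i : ℝ) * Real.log mu ^ (j - i)) • G j)
    (n : ℕ) {i : ℕ} (hi : i + n = l) : AlmostHom act k n (G i) := by
  induction n using Nat.strong_induction_on generalizing i with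
  | _ n ih =>
    cases n with
    | zero =>
      rw [AlmostHom]
      intro mu hmu
      simp [htrans i (by omega) mu hmu, ← hi]
    | succ m =>
      rw [AlmostHom]
      refine ⟨fun j => ((i + 1 + j).choose i : ℝ) • G (i + 1 + j),
        fun j => almostHom_smul act k _ (ih _ (by omega) (by omega)) _, fun mu hmu => ?_⟩
      rw [htrans i (by omega) mu hmu, sum_Icc_eq_add_sum_fin (by omega), ← hi,
        Nat.add_sub_cancel_left, smul_add]
      simp only [Nat.choose_self, Nat.cast_one, Nat.sub_self, pow_zero, mul_one, one_smul,
        smul_smul]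
      congr 3 with j
      rw [show i + 1 + (j : ℕ) - i = j + 1 by omega, mul_comm]

end Transform

theorem almostHom_coefficients_transform_general {W : Type*} [AddCommGroup W] [Module ℝ W]
    (act : ℝ → W →ₗ[ℝ] W)
    (hmul : ∀ lam mu : ℝ, 0 < lam → 0 < mu → act (lam * mu) = (act lam).comp (act mu))
    (k : ℝ) (l : ℕ) (G : ℕ → W)
    (hexp : ∀ lam : ℝ, 0 < lam →
      act lam (G 0) = lam ^ k • ∑ j ∈ Finset.range (l + 1), (Real.log lam ^ j) • G j) :
    (∀ i ≤ l, ∀ mu : ℝ, 0 < mu →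
      act mu (G i) = mu ^ k • ∑ j ∈ Finset.Icc i l,
        ((j.choose i : ℝ) * Real.log mu ^ (j - i)) • G j) ∧
    (∀ i ≤ l, AlmostHom act k (l - i) (G i)) := by
  have htrans := fun i (hi : i ≤ l) mu (hmu : 0 < mu) => act_eq_sum_choose_smul hmul hexp hmu hi
  exact ⟨htrans, fun i hi => almostHom_of_act_eq_sum_choose_smul htrans _ (by omega)⟩

/-- If `(G₀)_λ = λ^k Σ_{j=0}^{l} (log λ)^j G_j` for all `λ > 0`, then for all `0 ≤ i ≤ l`
and `μ > 0`, `(G_i)_μ = μ^k Σ_{j=i}^{l} C(j,i) (log μ)^{j-i} G_j`; in particular each `G_i`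
has almost homogeneous degree `k` and order `l - i`, and `G₀` has almost homogeneous
degree `k` and order `l` in the recursive sense. -/
theorem almostHom_coefficients_transform {W : Type*} [AddCommGroup W] [Module ℝ W]
    (act : ℝ → W →ₗ[ℝ] W)
    (hone : act 1 = LinearMap.id)
    (hmul : ∀ lam mu : ℝ, 0 < lam → 0 < mu → act (lam * mu) = (act lam).comp (act mu))
    (k : ℝ) (l : ℕ) (G : ℕ → W)
    (hexp : ∀ lam : ℝ, 0 < lam →
      act lam (G 0) = lam ^ k • ∑ j ∈ Finset.range (l + 1), (Real.log lam ^ j) • G j) :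
    (∀ i ≤ l, ∀ mu : ℝ, 0 < mu →
      act mu (G i) = mu ^ k • ∑ j ∈ Finset.Icc i l,
        ((j.choose i : ℝ) * Real.log mu ^ (j - i)) • G j) ∧
    (∀ i ≤ l, AlmostHom act k (l - i) (G i)) :=
  almostHom_coefficients_transform_general act hmul k l G hexp
end
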